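/- arXiv:1506.05138 — 3 statements merged into one kernel-verified Lean document; each statement's English description precedes it below -/
import Mathlib

section
/- The sublattice {v ∈ Λ : (abr)(v) = v} of vectors fixed by the element abr has rank 1 and is spanned by K; likewise the sublattice of vectors fixed by the element a²br has rank 1 and is spanned by K. -/
open Matrix

/-- The Picard lattice `Λ = ℤ⁷` of a smooth cubic surface, with basis
`L = e₀, E₁ = e₁, …, E₆ = e₆`. -/
abbrev Lam : Type := Fin 7 → ℤ

/-- The Gram matrix of the intersection form: `L·L = 1`, `Eᵢ·Eᵢ = -1`, other products `0`. -/
def Jmat : Matrix (Fin 7) (Fin 7) ℤ := Matrix.diagonal ![1, -1, -1, -1, -1, -1, -1]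

/-- The intersection form on `Λ`. -/
def form (v w : Lam) : ℤ := v ⬝ᵥ (Jmat *ᵥ w)

/-- The class `L`. -/
def Lv : Lam := ![1, 0, 0, 0, 0, 0, 0]

/-- The classes `E₁, …, E₆` (indexed by `Fin 6`, so `Ev i = E_{i+1}`). -/
def Ev (i : Fin 6) : Lam := fun j => if j = i.succ then 1 else 0

/-- The canonical class `K = -3L + E₁ + ⋯ + E₆`. -/
def Kv : Lam := ![-3, 1, 1, 1, 1, 1, 1]

/-- `Lij i j = L - Eᵢ - Eⱼ` (with the `Fin 6` indexing, `Lij i j = L_{(i+1)(j+1)}`). -/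
def Lij (i j : Fin 6) : Lam := Lv - Ev i - Ev j

/-- `Qv i = 2L + Eᵢ - (E₁ + ⋯ + E₆)` (with the `Fin 6` indexing, `Qv i = Q_{i+1}`). -/
def Qv (i : Fin 6) : Lam := 2 • Lv + Ev i - ∑ k, Ev k

/-- A `(-1)`-class: a vector `v` with `v·v = -1` and `v·K = -1`. -/
def IsClass (v : Lam) : Prop := form v v = -1 ∧ form v Kv = -1

/-- The group of invertible `7 × 7` integer matrices, i.e. the group of `ℤ`-linear
automorphisms of `Λ` (acting via `A *ᵥ ·`). -/
abbrev GL7 := (Matrix (Fin 7) (Fin 7) ℤ)ˣ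

/-- `W`: the subgroup of automorphisms of `Λ` preserving the intersection form and
fixing `K`; it is isomorphic to the Weyl group `W(E₆)`. -/
def W : Subgroup GL7 where
  carrier := {A | (A : Matrix (Fin 7) (Fin 7) ℤ)ᵀ * Jmat * A = Jmat ∧
    (A : Matrix (Fin 7) (Fin 7) ℤ) *ᵥ Kv = Kv}
  one_mem' := by simp
  mul_mem' := by
    rintro A B ⟨hA1, hA2⟩ ⟨hB1, hB2⟩
    refine ⟨?_, ?_⟩ <;> simp only [Units.val_mul]
    · rw [Matrix.transpose_mul]
      calc (B : Matrix (Fin 7) (Fin 7) ℤ)ᵀ * (A : Matrix (Fin 7) (Fin 7) ℤ)ᵀ * Jmat *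
            ((A : Matrix (Fin 7) (Fin 7) ℤ) * (B : Matrix (Fin 7) (Fin 7) ℤ))
          = (B : Matrix (Fin 7) (Fin 7) ℤ)ᵀ *
            ((A : Matrix (Fin 7) (Fin 7) ℤ)ᵀ * Jmat * (A : Matrix (Fin 7) (Fin 7) ℤ)) *
            (B : Matrix (Fin 7) (Fin 7) ℤ) := by
            simp only [Matrix.mul_assoc]
        _ = Jmat := by rw [hA1, hB1]
    · rw [← Matrix.mulVec_mulVec, hB2, hA2]
  inv_mem' := by
    rintro A ⟨hA1, hA2⟩
    refine ⟨?_, ?_⟩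
    · calc ((A⁻¹ : GL7) : Matrix (Fin 7) (Fin 7) ℤ)ᵀ * Jmat * ((A⁻¹ : GL7) : Matrix (Fin 7) (Fin 7) ℤ)
          = ((A⁻¹ : GL7) : Matrix (Fin 7) (Fin 7) ℤ)ᵀ *
            ((A : Matrix (Fin 7) (Fin 7) ℤ)ᵀ * Jmat * (A : Matrix (Fin 7) (Fin 7) ℤ)) *
            ((A⁻¹ : GL7) : Matrix (Fin 7) (Fin 7) ℤ) := by rw [hA1]
        _ = ((A : Matrix (Fin 7) (Fin 7) ℤ) * ((A⁻¹ : GL7) : Matrix (Fin 7) (Fin 7) ℤ))ᵀ * Jmat *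
            ((A : Matrix (Fin 7) (Fin 7) ℤ) * ((A⁻¹ : GL7) : Matrix (Fin 7) (Fin 7) ℤ)) := by
            rw [Matrix.transpose_mul]; simp only [Matrix.mul_assoc]
        _ = Jmat := by rw [Units.mul_inv]; simp
    · conv_lhs => rw [← hA2]
      rw [Matrix.mulVec_mulVec, Units.inv_mul, Matrix.one_mulVec]

def aM : Matrix (Fin 7) (Fin 7) ℤ :=
  !![1, 0, 0, 0, 0, 0, 0;
     0, 0, 0, 1, 0, 0, 0;
     0, 1, 0, 0, 0, 0, 0;
     0, 0, 1, 0, 0, 0, 0;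
     0, 0, 0, 0, 1, 0, 0;
     0, 0, 0, 0, 0, 1, 0;
     0, 0, 0, 0, 0, 0, 1]

def bM : Matrix (Fin 7) (Fin 7) ℤ :=
  !![1, 0, 0, 0, 0, 0, 0;
     0, 1, 0, 0, 0, 0, 0;
     0, 0, 1, 0, 0, 0, 0;
     0, 0, 0, 1, 0, 0, 0;
     0, 0, 0, 0, 0, 0, 1;
     0, 0, 0, 0, 1, 0, 0;
     0, 0, 0, 0, 0, 1, 0]

def cM : Matrix (Fin 7) (Fin 7) ℤ :=
  !![1, 0, 0, 0, 0, 0, 0;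
     0, 0, 0, 0, 1, 0, 0;
     0, 0, 0, 0, 0, 1, 0;
     0, 0, 0, 0, 0, 0, 1;
     0, 1, 0, 0, 0, 0, 0;
     0, 0, 1, 0, 0, 0, 0;
     0, 0, 0, 1, 0, 0, 0]

def rM : Matrix (Fin 7) (Fin 7) ℤ :=
  !![4, 2, 2, 2, 1, 1, 1;
     -1, 0, -1, -1, 0, 0, 0;
     -1, -1, 0, -1, 0, 0, 0;
     -1, -1, -1, 0, 0, 0, 0;
     -2, -1, -1, -1, 0, -1, -1;
     -2, -1, -1, -1, -1, 0, -1;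
     -2, -1, -1, -1, -1, -1, 0]

def rMi : Matrix (Fin 7) (Fin 7) ℤ :=
  !![4, 1, 1, 1, 2, 2, 2;
     -2, 0, -1, -1, -1, -1, -1;
     -2, -1, 0, -1, -1, -1, -1;
     -2, -1, -1, 0, -1, -1, -1;
     -1, 0, 0, 0, 0, -1, -1;
     -1, 0, 0, 0, -1, 0, -1;
     -1, 0, 0, 0, -1, -1, 0]

def sM : Matrix (Fin 7) (Fin 7) ℤ :=
  !![5, 2, 2, 2, 2, 2, 2;
     -2, 0, -1, -1, -1, -1, -1;
     -2, -1, 0, -1, -1, -1, -1;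
     -2, -1, -1, 0, -1, -1, -1;
     -2, -1, -1, -1, 0, -1, -1;
     -2, -1, -1, -1, -1, 0, -1;
     -2, -1, -1, -1, -1, -1, 0]

/-- `a = w₍₁₂₃₎`, as an automorphism of `Λ` (sending `Eᵢ ↦ E_{σ(i)}`, fixing `L`). -/
def aU : GL7 := ⟨aM, aMᵀ, by decide, by decide⟩

/-- `b = w₍₄₅₆₎`. -/
def bU : GL7 := ⟨bM, bMᵀ, by decide, by decide⟩

/-- `c = w₍₁₄₎₍₂₅₎₍₃₆₎`. -/
def cU : GL7 := ⟨cM, cMᵀ, by decide, by decide⟩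

/-- `r`: `r(L) = 4L - (E₁+E₂+E₃) - 2(E₄+E₅+E₆)`, `r(Eᵢ) = Qᵢ` for `i ∈ {1,2,3}`,
`r(Eᵢ) = L_{jk}` for `i ∈ {4,5,6}`, `{j,k} = {4,5,6} \ {i}`. -/
def rU : GL7 := ⟨rM, rMi, by decide, by decide⟩

/-- `s`: `s(L) = 5L - 2(E₁ + ⋯ + E₆)`, `s(Eᵢ) = Qᵢ`. -/
def sU : GL7 := ⟨sM, sM, by decide, by decide⟩

/-- `g = ab = w₍₁₂₃₎₍₄₅₆₎`. -/
def gU : GL7 := aU * bU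

/-- The sublattice of vectors fixed by an automorphism `A`. -/
def fixedBy (A : GL7) : Submodule ℤ Lam :=
  LinearMap.ker ((A : Matrix (Fin 7) (Fin 7) ℤ).mulVecLin - LinearMap.id)

/-- The sublattice of vectors fixed by every element of a subgroup `S`. -/
def fixedOf (S : Subgroup GL7) : Submodule ℤ Lam := ⨅ A : S, fixedBy (A : GL7)

def KE : Matrix (Fin 7) (Fin 7) ℤ := Matrix.of fun i j => if j = 1 then Kv i else 0

def C1 : Matrix (Fin 7) (Fin 7) ℤ :=
  !![-12, -8, -2, -5, -4, -4, -4;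
     -12, -4, -4, -4, -4, -4, -4;
     -12, -3, -6, -3, -4, -4, -4;
     -12, -2, -5, -5, -4, -4, -4;
     -11, -2, -4, -3, -5, -3, -4;
     -14, -3, -5, -4, -5, -6, -4;
     -8, -1, -3, -2, -2, -3, -4]

def C2 : Matrix (Fin 7) (Fin 7) ℤ :=
  !![-12, -8, -5, -2, -4, -4, -4;
     -12, -4, -4, -4, -4, -4, -4;
     -12, -2, -5, -5, -4, -4, -4;
     -12, -3, -3, -6, -4, -4, -4;
     -11, -2, -3, -4, -5, -3, -4;
     -14, -3, -4, -5, -5, -6, -4;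
     -8, -1, -2, -3, -2, -3, -4]

lemma KE_mulVec (v : Lam) : KE *ᵥ v = (v 1) • Kv := by
  funext i
  simp [KE, Matrix.mulVec, dotProduct, Fin.sum_univ_seven, mul_comm]

lemma Kv_ne_zero : Kv ≠ 0 := by
  intro h
  have := congrFun h 0
  simp [Kv] at this

lemma finrank_span_Kv : Module.finrank ℤ ↥(Submodule.span ℤ {Kv}) = 1 := by
  have e := LinearEquiv.toSpanNonzeroSingleton ℤ Lam Kv Kv_ne_zero
  exact e.symm.finrank_eq.trans (Module.finrank_self ℤ)

lemma fixed_eq_span (M C : Matrix (Fin 7) (Fin 7) ℤ)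
    (key : C * (M - 1) = (3 : ℤ) • (1 - KE))
    (hK : M *ᵥ Kv = Kv) :
    LinearMap.ker (M.mulVecLin - LinearMap.id) = Submodule.span ℤ {Kv} := by
  apply le_antisymm
  · intro v hv
    rw [LinearMap.mem_ker, LinearMap.sub_apply, LinearMap.id_apply, sub_eq_zero,
      Matrix.mulVecLin_apply] at hv
    rw [Submodule.mem_span_singleton]
    refine ⟨v 1, ?_⟩
    have h0 : (M - 1) *ᵥ v = 0 := by
      rw [Matrix.sub_mulVec, Matrix.one_mulVec, hv, sub_self]
    have h1 : (C * (M - 1)) *ᵥ v = 0 := by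
      rw [← Matrix.mulVec_mulVec, h0, Matrix.mulVec_zero]
    rw [key, Matrix.smul_mulVec, smul_eq_zero] at h1
    rcases h1 with h1 | h1
    · norm_num at h1
    · rw [Matrix.sub_mulVec, Matrix.one_mulVec, KE_mulVec, sub_eq_zero] at h1
      exact h1.symm
  · rw [Submodule.span_le, Set.singleton_subset_iff]
    rw [SetLike.mem_coe, LinearMap.mem_ker, LinearMap.sub_apply, LinearMap.id_apply,
      sub_eq_zero, Matrix.mulVecLin_apply]
    exact hK

/-- **Lemma 4.9 (Galmin3).** The sublattice of `Λ` fixed by `abr` has rank 1 and is spanned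
by `K`; likewise for the sublattice fixed by `a²br`. -/
theorem fixed_of_abr_and_of_aabr :
    (fixedBy (aU * bU * rU) = Submodule.span ℤ {Kv} ∧
      Module.finrank ℤ ↥(fixedBy (aU * bU * rU)) = 1) ∧
    (fixedBy (aU * aU * bU * rU) = Submodule.span ℤ {Kv} ∧
      Module.finrank ℤ ↥(fixedBy (aU * aU * bU * rU)) = 1) := by
  have h1 : fixedBy (aU * bU * rU) = Submodule.span ℤ {Kv} := by
    show LinearMap.ker ((aM * bM * rM).mulVecLin - LinearMap.id) = _
    exact fixed_eq_span _ C1 (by decide) (by decide)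
  have h2 : fixedBy (aU * aU * bU * rU) = Submodule.span ℤ {Kv} := by
    show LinearMap.ker ((aM * aM * bM * rM).mulVecLin - LinearMap.id) = _
    exact fixed_eq_span _ C2 (by decide) (by decide)
  exact ⟨⟨h1, h1 ▸ finrank_span_Kv⟩, ⟨h2, h2 ▸ finrank_span_Kv⟩⟩
end

section
/- Every set of (−1)-classes of Λ that is invariant under the element cs and whose elements are pairwise orthogonal (v·w = 0 for any two distinct members) has at most one element. Indeed, the only (−1)-classes fixed by cs are L₁₄, L₂₅ and L₃₆, which pairwise have product 1, and every cs-orbit of size 2 among the (−1)-classes consists of two classes with product 1. -/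
open Matrix

section Aux

lemma form_apply (v w : Lam) : form v w =
    v 0 * w 0 - v 1 * w 1 - v 2 * w 2 - v 3 * w 3 - v 4 * w 4 - v 5 * w 5 - v 6 * w 6 := by
  have h5 : (![1, -1, -1, -1, -1, -1, -1] : Fin 7 → ℤ) 5 = -1 := rfl
  have h6 : (![1, -1, -1, -1, -1, -1, -1] : Fin 7 → ℤ) 6 = -1 := rfl
  simp [form, Jmat, dotProduct, Matrix.mulVec_diagonal, Fin.sum_univ_seven, h5, h6]
  ring

set_option maxHeartbeats 1000000 in
lemma cauchy6 (b1 b2 b3 b4 b5 b6 : ℤ) :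
    (b1+b2+b3+b4+b5+b6)^2 ≤ 6*(b1^2+b2^2+b3^2+b4^2+b5^2+b6^2) := by
  nlinarith [sq_nonneg (b1-b2), sq_nonneg (b1-b3), sq_nonneg (b1-b4), sq_nonneg (b1-b5),
    sq_nonneg (b1-b6), sq_nonneg (b2-b3), sq_nonneg (b2-b4), sq_nonneg (b2-b5), sq_nonneg (b2-b6),
    sq_nonneg (b3-b4), sq_nonneg (b3-b5), sq_nonneg (b3-b6), sq_nonneg (b4-b5),
    sq_nonneg (b4-b6), sq_nonneg (b5-b6)]

lemma bndA (a b1 b2 b3 b4 b5 b6 : ℤ)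
    (h1 : a*a - b1*b1 - b2*b2 - b3*b3 - b4*b4 - b5*b5 - b6*b6 = -1)
    (h2 : -3*a - b1 - b2 - b3 - b4 - b5 - b6 = -1) : 0 ≤ a ∧ a ≤ 2 := by
  have hc := cauchy6 b1 b2 b3 b4 b5 b6
  have hq : 3*a^2 - 6*a - 5 ≤ 0 := by nlinarith [hc]
  constructor
  · by_contra h
    push_neg at h
    have h' : a ≤ -1 := by omega
    nlinarith [mul_nonneg (by linarith : (0:ℤ) ≤ -(a+1)) (by linarith : (0:ℤ) ≤ -a)]
  · by_contra h
    push_neg at h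
    have h' : 3 ≤ a := by omega
    nlinarith [mul_nonneg (by linarith : (0:ℤ) ≤ a-3) (by linarith : (0:ℤ) ≤ a)]

set_option maxHeartbeats 1000000 in
lemma bndB (a b1 b2 b3 b4 b5 b6 : ℤ)
    (h1 : a*a - b1*b1 - b2*b2 - b3*b3 - b4*b4 - b5*b5 - b6*b6 = -1)
    (h2 : -3*a - b1 - b2 - b3 - b4 - b5 - b6 = -1)
    (ha0 : 0 ≤ a) (ha2 : a ≤ 2) : -1 ≤ b1 ∧ b1 ≤ 1 := by
  constructor
  · by_contra h
    push_neg at h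
    have h' : b1 ≤ -2 := by omega
    nlinarith [sq_nonneg (b2-b3), sq_nonneg (b2-b4), sq_nonneg (b2-b5), sq_nonneg (b2-b6),
      sq_nonneg (b3-b4), sq_nonneg (b3-b5), sq_nonneg (b3-b6), sq_nonneg (b4-b5),
      sq_nonneg (b4-b6), sq_nonneg (b5-b6),
      mul_nonneg (by linarith : (0:ℤ) ≤ -b1 - 2) ha0, sq_nonneg a, sq_nonneg (b1+2)]
  · by_contra h
    push_neg at h
    have h' : 2 ≤ b1 := by omega
    nlinarith [sq_nonneg (b2-b3), sq_nonneg (b2-b4), sq_nonneg (b2-b5), sq_nonneg (b2-b6),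
      sq_nonneg (b3-b4), sq_nonneg (b3-b5), sq_nonneg (b3-b6), sq_nonneg (b4-b5),
      sq_nonneg (b4-b6), sq_nonneg (b5-b6),
      mul_nonneg (by linarith : (0:ℤ) ≤ b1 - 2) ha0, sq_nonneg a, sq_nonneg (b1-2)]

set_option maxHeartbeats 4000000 in
set_option synthInstance.maxHeartbeats 1000000 in
set_option synthInstance.maxSize 10000 in
lemma keyLemma : ∀ a ∈ ([0,1,2] : List ℤ), ∀ b1 ∈ ([-1,0,1] : List ℤ),
    ∀ b2 ∈ ([-1,0,1] : List ℤ), ∀ b3 ∈ ([-1,0,1] : List ℤ), ∀ b4 ∈ ([-1,0,1] : List ℤ),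
    ∀ b5 ∈ ([-1,0,1] : List ℤ), ∀ b6 ∈ ([-1,0,1] : List ℤ),
    (a*a - b1*b1 - b2*b2 - b3*b3 - b4*b4 - b5*b5 - b6*b6 = -1 ∧
      -3*a - b1 - b2 - b3 - b4 - b5 - b6 = -1) →
      (a = 0 ∧ b1 = 1 ∧ b2 = 0 ∧ b3 = 0 ∧ b4 = 0 ∧ b5 = 0 ∧ b6 = 0) ∨
      (a = 0 ∧ b1 = 0 ∧ b2 = 1 ∧ b3 = 0 ∧ b4 = 0 ∧ b5 = 0 ∧ b6 = 0) ∨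
      (a = 0 ∧ b1 = 0 ∧ b2 = 0 ∧ b3 = 1 ∧ b4 = 0 ∧ b5 = 0 ∧ b6 = 0) ∨
      (a = 0 ∧ b1 = 0 ∧ b2 = 0 ∧ b3 = 0 ∧ b4 = 1 ∧ b5 = 0 ∧ b6 = 0) ∨
      (a = 0 ∧ b1 = 0 ∧ b2 = 0 ∧ b3 = 0 ∧ b4 = 0 ∧ b5 = 1 ∧ b6 = 0) ∨
      (a = 0 ∧ b1 = 0 ∧ b2 = 0 ∧ b3 = 0 ∧ b4 = 0 ∧ b5 = 0 ∧ b6 = 1) ∨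
      (a = 1 ∧ b1 = -1 ∧ b2 = -1 ∧ b3 = 0 ∧ b4 = 0 ∧ b5 = 0 ∧ b6 = 0) ∨
      (a = 1 ∧ b1 = -1 ∧ b2 = 0 ∧ b3 = -1 ∧ b4 = 0 ∧ b5 = 0 ∧ b6 = 0) ∨
      (a = 1 ∧ b1 = -1 ∧ b2 = 0 ∧ b3 = 0 ∧ b4 = -1 ∧ b5 = 0 ∧ b6 = 0) ∨
      (a = 1 ∧ b1 = -1 ∧ b2 = 0 ∧ b3 = 0 ∧ b4 = 0 ∧ b5 = -1 ∧ b6 = 0) ∨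
      (a = 1 ∧ b1 = -1 ∧ b2 = 0 ∧ b3 = 0 ∧ b4 = 0 ∧ b5 = 0 ∧ b6 = -1) ∨
      (a = 1 ∧ b1 = 0 ∧ b2 = -1 ∧ b3 = -1 ∧ b4 = 0 ∧ b5 = 0 ∧ b6 = 0) ∨
      (a = 1 ∧ b1 = 0 ∧ b2 = -1 ∧ b3 = 0 ∧ b4 = -1 ∧ b5 = 0 ∧ b6 = 0) ∨
      (a = 1 ∧ b1 = 0 ∧ b2 = -1 ∧ b3 = 0 ∧ b4 = 0 ∧ b5 = -1 ∧ b6 = 0) ∨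
      (a = 1 ∧ b1 = 0 ∧ b2 = -1 ∧ b3 = 0 ∧ b4 = 0 ∧ b5 = 0 ∧ b6 = -1) ∨
      (a = 1 ∧ b1 = 0 ∧ b2 = 0 ∧ b3 = -1 ∧ b4 = -1 ∧ b5 = 0 ∧ b6 = 0) ∨
      (a = 1 ∧ b1 = 0 ∧ b2 = 0 ∧ b3 = -1 ∧ b4 = 0 ∧ b5 = -1 ∧ b6 = 0) ∨
      (a = 1 ∧ b1 = 0 ∧ b2 = 0 ∧ b3 = -1 ∧ b4 = 0 ∧ b5 = 0 ∧ b6 = -1) ∨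
      (a = 1 ∧ b1 = 0 ∧ b2 = 0 ∧ b3 = 0 ∧ b4 = -1 ∧ b5 = -1 ∧ b6 = 0) ∨
      (a = 1 ∧ b1 = 0 ∧ b2 = 0 ∧ b3 = 0 ∧ b4 = -1 ∧ b5 = 0 ∧ b6 = -1) ∨
      (a = 1 ∧ b1 = 0 ∧ b2 = 0 ∧ b3 = 0 ∧ b4 = 0 ∧ b5 = -1 ∧ b6 = -1) ∨
      (a = 2 ∧ b1 = 0 ∧ b2 = -1 ∧ b3 = -1 ∧ b4 = -1 ∧ b5 = -1 ∧ b6 = -1) ∨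
      (a = 2 ∧ b1 = -1 ∧ b2 = 0 ∧ b3 = -1 ∧ b4 = -1 ∧ b5 = -1 ∧ b6 = -1) ∨
      (a = 2 ∧ b1 = -1 ∧ b2 = -1 ∧ b3 = 0 ∧ b4 = -1 ∧ b5 = -1 ∧ b6 = -1) ∨
      (a = 2 ∧ b1 = -1 ∧ b2 = -1 ∧ b3 = -1 ∧ b4 = 0 ∧ b5 = -1 ∧ b6 = -1) ∨
      (a = 2 ∧ b1 = -1 ∧ b2 = -1 ∧ b3 = -1 ∧ b4 = -1 ∧ b5 = 0 ∧ b6 = -1) ∨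
      (a = 2 ∧ b1 = -1 ∧ b2 = -1 ∧ b3 = -1 ∧ b4 = -1 ∧ b5 = -1 ∧ b6 = 0) := by decide

lemma vecext (v : Lam) {a b1 b2 b3 b4 b5 b6 : ℤ}
    (h : v 0 = a ∧ v 1 = b1 ∧ v 2 = b2 ∧ v 3 = b3 ∧ v 4 = b4 ∧ v 5 = b5 ∧ v 6 = b6) :
    v = ![a, b1, b2, b3, b4, b5, b6] := by
  obtain ⟨h0, h1, h2, h3, h4, h5, h6⟩ := h
  funext i
  fin_cases i <;> assumption

lemma classify (v : Lam) (h : IsClass v) :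
    v = ![(0:ℤ), 1, 0, 0, 0, 0, 0] ∨
      v = ![(0:ℤ), 0, 1, 0, 0, 0, 0] ∨
      v = ![(0:ℤ), 0, 0, 1, 0, 0, 0] ∨
      v = ![(0:ℤ), 0, 0, 0, 1, 0, 0] ∨
      v = ![(0:ℤ), 0, 0, 0, 0, 1, 0] ∨
      v = ![(0:ℤ), 0, 0, 0, 0, 0, 1] ∨
      v = ![(1:ℤ), -1, -1, 0, 0, 0, 0] ∨
      v = ![(1:ℤ), -1, 0, -1, 0, 0, 0] ∨
      v = ![(1:ℤ), -1, 0, 0, -1, 0, 0] ∨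
      v = ![(1:ℤ), -1, 0, 0, 0, -1, 0] ∨
      v = ![(1:ℤ), -1, 0, 0, 0, 0, -1] ∨
      v = ![(1:ℤ), 0, -1, -1, 0, 0, 0] ∨
      v = ![(1:ℤ), 0, -1, 0, -1, 0, 0] ∨
      v = ![(1:ℤ), 0, -1, 0, 0, -1, 0] ∨
      v = ![(1:ℤ), 0, -1, 0, 0, 0, -1] ∨
      v = ![(1:ℤ), 0, 0, -1, -1, 0, 0] ∨
      v = ![(1:ℤ), 0, 0, -1, 0, -1, 0] ∨
      v = ![(1:ℤ), 0, 0, -1, 0, 0, -1] ∨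
      v = ![(1:ℤ), 0, 0, 0, -1, -1, 0] ∨
      v = ![(1:ℤ), 0, 0, 0, -1, 0, -1] ∨
      v = ![(1:ℤ), 0, 0, 0, 0, -1, -1] ∨
      v = ![(2:ℤ), 0, -1, -1, -1, -1, -1] ∨
      v = ![(2:ℤ), -1, 0, -1, -1, -1, -1] ∨
      v = ![(2:ℤ), -1, -1, 0, -1, -1, -1] ∨
      v = ![(2:ℤ), -1, -1, -1, 0, -1, -1] ∨
      v = ![(2:ℤ), -1, -1, -1, -1, 0, -1] ∨
      v = ![(2:ℤ), -1, -1, -1, -1, -1, 0] := by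
  obtain ⟨hq, hk⟩ := h
  rw [form_apply] at hq hk
  have e0 : Kv 0 = -3 := rfl
  have e1 : Kv 1 = 1 := rfl
  have e2 : Kv 2 = 1 := rfl
  have e3 : Kv 3 = 1 := rfl
  have e4 : Kv 4 = 1 := rfl
  have e5 : Kv 5 = 1 := rfl
  have e6 : Kv 6 = 1 := rfl
  rw [e0, e1, e2, e3, e4, e5, e6] at hk
  have hq' : v 0 * v 0 - v 1 * v 1 - v 2 * v 2 - v 3 * v 3 - v 4 * v 4 - v 5 * v 5 - v 6 * v 6 = -1 := hq
  have hk' : -3 * v 0 - v 1 - v 2 - v 3 - v 4 - v 5 - v 6 = -1 := by linarith [hk]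
  obtain ⟨ha0, ha2⟩ := bndA _ _ _ _ _ _ _ hq' hk'
  have hb1 := bndB _ _ _ _ _ _ _ hq' hk' ha0 ha2
  have hb2 := bndB (v 0) (v 2) (v 1) (v 3) (v 4) (v 5) (v 6) (by linarith) (by linarith) ha0 ha2
  have hb3 := bndB (v 0) (v 3) (v 1) (v 2) (v 4) (v 5) (v 6) (by linarith) (by linarith) ha0 ha2
  have hb4 := bndB (v 0) (v 4) (v 1) (v 2) (v 3) (v 5) (v 6) (by linarith) (by linarith) ha0 ha2
  have hb5 := bndB (v 0) (v 5) (v 1) (v 2) (v 3) (v 4) (v 6) (by linarith) (by linarith) ha0 ha2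
  have hb6 := bndB (v 0) (v 6) (v 1) (v 2) (v 3) (v 4) (v 5) (by linarith) (by linarith) ha0 ha2
  have hmem : ∀ x : ℤ, -1 ≤ x → x ≤ 1 → x ∈ ([-1,0,1] : List ℤ) := by
    intro x h1 h2
    simp only [List.mem_cons, List.mem_singleton]
    omega
  have hmema : v 0 ∈ ([0,1,2] : List ℤ) := by
    simp only [List.mem_cons, List.mem_singleton]
    omega
  have key := keyLemma (v 0) hmema (v 1) (hmem _ hb1.1 hb1.2) (v 2) (hmem _ hb2.1 hb2.2)
    (v 3) (hmem _ hb3.1 hb3.2) (v 4) (hmem _ hb4.1 hb4.2) (v 5) (hmem _ hb5.1 hb5.2)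
    (v 6) (hmem _ hb6.1 hb6.2) ⟨hq', hk'⟩
  rcases key with (h|h|h|h|h|h|h|h|h|h|h|h|h|h|h|h|h|h|h|h|h|h|h|h|h|h|h)
  · exact Or.inl (vecext v h)
  · exact Or.inr (Or.inl (vecext v h))
  · exact Or.inr (Or.inr (Or.inl (vecext v h)))
  · exact Or.inr (Or.inr (Or.inr (Or.inl (vecext v h))))
  · exact Or.inr (Or.inr (Or.inr (Or.inr (Or.inl (vecext v h)))))
  · exact Or.inr (Or.inr (Or.inr (Or.inr (Or.inr (Or.inl (vecext v h))))))
  · exact Or.inr (Or.inr (Or.inr (Or.inr (Or.inr (Or.inr (Or.inl (vecext v h)))))))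
  · exact Or.inr (Or.inr (Or.inr (Or.inr (Or.inr (Or.inr (Or.inr (Or.inl (vecext v h))))))))
  · exact Or.inr (Or.inr (Or.inr (Or.inr (Or.inr (Or.inr (Or.inr (Or.inr (Or.inl (vecext v h)))))))))
  · exact Or.inr (Or.inr (Or.inr (Or.inr (Or.inr (Or.inr (Or.inr (Or.inr (Or.inr (Or.inl (vecext v h))))))))))
  · exact Or.inr (Or.inr (Or.inr (Or.inr (Or.inr (Or.inr (Or.inr (Or.inr (Or.inr (Or.inr (Or.inl (vecext v h)))))))))))
  · exact Or.inr (Or.inr (Or.inr (Or.inr (Or.inr (Or.inr (Or.inr (Or.inr (Or.inr (Or.inr (Or.inr (Or.inl (vecext v h))))))))))))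
  · exact Or.inr (Or.inr (Or.inr (Or.inr (Or.inr (Or.inr (Or.inr (Or.inr (Or.inr (Or.inr (Or.inr (Or.inr (Or.inl (vecext v h)))))))))))))
  · exact Or.inr (Or.inr (Or.inr (Or.inr (Or.inr (Or.inr (Or.inr (Or.inr (Or.inr (Or.inr (Or.inr (Or.inr (Or.inr (Or.inl (vecext v h))))))))))))))
  · exact Or.inr (Or.inr (Or.inr (Or.inr (Or.inr (Or.inr (Or.inr (Or.inr (Or.inr (Or.inr (Or.inr (Or.inr (Or.inr (Or.inr (Or.inl (vecext v h)))))))))))))))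
  · exact Or.inr (Or.inr (Or.inr (Or.inr (Or.inr (Or.inr (Or.inr (Or.inr (Or.inr (Or.inr (Or.inr (Or.inr (Or.inr (Or.inr (Or.inr (Or.inl (vecext v h))))))))))))))))
  · exact Or.inr (Or.inr (Or.inr (Or.inr (Or.inr (Or.inr (Or.inr (Or.inr (Or.inr (Or.inr (Or.inr (Or.inr (Or.inr (Or.inr (Or.inr (Or.inr (Or.inl (vecext v h)))))))))))))))))
  · exact Or.inr (Or.inr (Or.inr (Or.inr (Or.inr (Or.inr (Or.inr (Or.inr (Or.inr (Or.inr (Or.inr (Or.inr (Or.inr (Or.inr (Or.inr (Or.inr (Or.inr (Or.inl (vecext v h))))))))))))))))))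
  · exact Or.inr (Or.inr (Or.inr (Or.inr (Or.inr (Or.inr (Or.inr (Or.inr (Or.inr (Or.inr (Or.inr (Or.inr (Or.inr (Or.inr (Or.inr (Or.inr (Or.inr (Or.inr (Or.inl (vecext v h)))))))))))))))))))
  · exact Or.inr (Or.inr (Or.inr (Or.inr (Or.inr (Or.inr (Or.inr (Or.inr (Or.inr (Or.inr (Or.inr (Or.inr (Or.inr (Or.inr (Or.inr (Or.inr (Or.inr (Or.inr (Or.inr (Or.inl (vecext v h))))))))))))))))))))
  · exact Or.inr (Or.inr (Or.inr (Or.inr (Or.inr (Or.inr (Or.inr (Or.inr (Or.inr (Or.inr (Or.inr (Or.inr (Or.inr (Or.inr (Or.inr (Or.inr (Or.inr (Or.inr (Or.inr (Or.inr (Or.inl (vecext v h)))))))))))))))))))))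
  · exact Or.inr (Or.inr (Or.inr (Or.inr (Or.inr (Or.inr (Or.inr (Or.inr (Or.inr (Or.inr (Or.inr (Or.inr (Or.inr (Or.inr (Or.inr (Or.inr (Or.inr (Or.inr (Or.inr (Or.inr (Or.inr (Or.inl (vecext v h))))))))))))))))))))))
  · exact Or.inr (Or.inr (Or.inr (Or.inr (Or.inr (Or.inr (Or.inr (Or.inr (Or.inr (Or.inr (Or.inr (Or.inr (Or.inr (Or.inr (Or.inr (Or.inr (Or.inr (Or.inr (Or.inr (Or.inr (Or.inr (Or.inr (Or.inl (vecext v h)))))))))))))))))))))))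
  · exact Or.inr (Or.inr (Or.inr (Or.inr (Or.inr (Or.inr (Or.inr (Or.inr (Or.inr (Or.inr (Or.inr (Or.inr (Or.inr (Or.inr (Or.inr (Or.inr (Or.inr (Or.inr (Or.inr (Or.inr (Or.inr (Or.inr (Or.inr (Or.inl (vecext v h))))))))))))))))))))))))
  · exact Or.inr (Or.inr (Or.inr (Or.inr (Or.inr (Or.inr (Or.inr (Or.inr (Or.inr (Or.inr (Or.inr (Or.inr (Or.inr (Or.inr (Or.inr (Or.inr (Or.inr (Or.inr (Or.inr (Or.inr (Or.inr (Or.inr (Or.inr (Or.inr (Or.inl (vecext v h)))))))))))))))))))))))))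
  · exact Or.inr (Or.inr (Or.inr (Or.inr (Or.inr (Or.inr (Or.inr (Or.inr (Or.inr (Or.inr (Or.inr (Or.inr (Or.inr (Or.inr (Or.inr (Or.inr (Or.inr (Or.inr (Or.inr (Or.inr (Or.inr (Or.inr (Or.inr (Or.inr (Or.inr (Or.inl (vecext v h))))))))))))))))))))))))))
  · exact Or.inr (Or.inr (Or.inr (Or.inr (Or.inr (Or.inr (Or.inr (Or.inr (Or.inr (Or.inr (Or.inr (Or.inr (Or.inr (Or.inr (Or.inr (Or.inr (Or.inr (Or.inr (Or.inr (Or.inr (Or.inr (Or.inr (Or.inr (Or.inr (Or.inr (Or.inr (vecext v h))))))))))))))))))))))))))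

end Aux
/-- **Lemma 4.12 (Galnonrat1).** Every `cs`-invariant set of pairwise orthogonal
`(-1)`-classes has at most one element. Indeed the only `(-1)`-classes fixed by `cs` are
`L₁₄`, `L₂₅`, `L₃₆` (pairwise meeting with product 1), and any `cs`-orbit of size 2 among the
`(-1)`-classes consists of two classes with product 1.
(With the `Fin 6` indexing, `L₁₄ = Lij 0 3`, `L₂₅ = Lij 1 4`, `L₃₆ = Lij 2 5`.) -/
theorem cs_invariant_orthogonal_sets_are_small :
    (∀ S : Set Lam, (∀ v ∈ S, IsClass v) →
      (∀ v ∈ S, ((cU * sU : GL7) : Matrix (Fin 7) (Fin 7) ℤ) *ᵥ v ∈ S) →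
      (∀ v ∈ S, ∀ w ∈ S, v ≠ w → form v w = 0) → S.Subsingleton) ∧
    (∀ v : Lam, IsClass v →
      (((cU * sU : GL7) : Matrix (Fin 7) (Fin 7) ℤ) *ᵥ v = v ↔
        v = Lij 0 3 ∨ v = Lij 1 4 ∨ v = Lij 2 5)) ∧
    form (Lij 0 3) (Lij 1 4) = 1 ∧ form (Lij 0 3) (Lij 2 5) = 1 ∧
    form (Lij 1 4) (Lij 2 5) = 1 ∧
    (∀ v : Lam, IsClass v → ((cU * sU : GL7) : Matrix (Fin 7) (Fin 7) ℤ) *ᵥ v ≠ v →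
      form v (((cU * sU : GL7) : Matrix (Fin 7) (Fin 7) ℤ) *ᵥ v) = 1) := by
  have part2 : ∀ v : Lam, IsClass v →
      (((cU * sU : GL7) : Matrix (Fin 7) (Fin 7) ℤ) *ᵥ v = v ↔
        v = Lij 0 3 ∨ v = Lij 1 4 ∨ v = Lij 2 5) := by
    intro v h
    rcases classify v h with (rfl|rfl|rfl|rfl|rfl|rfl|rfl|rfl|rfl|rfl|rfl|rfl|rfl|rfl|rfl|rfl|rfl|rfl|rfl|rfl|rfl|rfl|rfl|rfl|rfl|rfl|rfl) <;> decide
  have part6 : ∀ v : Lam, IsClass v →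
      ((cU * sU : GL7) : Matrix (Fin 7) (Fin 7) ℤ) *ᵥ v ≠ v →
      form v (((cU * sU : GL7) : Matrix (Fin 7) (Fin 7) ℤ) *ᵥ v) = 1 := by
    intro v h
    rcases classify v h with (rfl|rfl|rfl|rfl|rfl|rfl|rfl|rfl|rfl|rfl|rfl|rfl|rfl|rfl|rfl|rfl|rfl|rfl|rfl|rfl|rfl|rfl|rfl|rfl|rfl|rfl|rfl) <;> decide
  refine ⟨?_, part2, by decide, by decide, by decide, part6⟩
  intro S hcl hinv horth v hv w hw
  by_contra hne
  have hfix : ∀ u ∈ S, ((cU * sU : GL7) : Matrix (Fin 7) (Fin 7) ℤ) *ᵥ u = u := by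
    intro u hu
    by_contra hneq
    have h1 := part6 u (hcl u hu) hneq
    have h2 := horth u hu _ (hinv u hu) (Ne.symm hneq)
    rw [h2] at h1
    exact absurd h1 (by decide)
  have hv3 := (part2 v (hcl v hv)).mp (hfix v hv)
  have hw3 := (part2 w (hcl w hw)).mp (hfix w hw)
  rcases hv3 with rfl | rfl | rfl <;> rcases hw3 with rfl | rfl | rfl <;>
    first
      | exact hne rfl
      | exact absurd (horth _ hv _ hw hne) (by decide)
end

section
/- Every set of (−1)-classes of Λ that is invariant under both elements c and r and whose elements are pairwise orthogonal (v·w = 0 for any two distinct members) has at most one element. -/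
open Matrix

def L27 : List (ℤ × ℤ × ℤ × ℤ × ℤ × ℤ × ℤ) :=
  [(0,0,0,0,0,0,1),
   (0,0,0,0,0,1,0),
   (0,0,0,0,1,0,0),
   (0,0,0,1,0,0,0),
   (0,0,1,0,0,0,0),
   (0,1,0,0,0,0,0),
   (1,-1,-1,0,0,0,0),
   (1,-1,0,-1,0,0,0),
   (1,-1,0,0,-1,0,0),
   (1,-1,0,0,0,-1,0),
   (1,-1,0,0,0,0,-1),
   (1,0,-1,-1,0,0,0),
   (1,0,-1,0,-1,0,0),
   (1,0,-1,0,0,-1,0),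
   (1,0,-1,0,0,0,-1),
   (1,0,0,-1,-1,0,0),
   (1,0,0,-1,0,-1,0),
   (1,0,0,-1,0,0,-1),
   (1,0,0,0,-1,-1,0),
   (1,0,0,0,-1,0,-1),
   (1,0,0,0,0,-1,-1),
   (2,-1,-1,-1,-1,-1,0),
   (2,-1,-1,-1,-1,0,-1),
   (2,-1,-1,-1,0,-1,-1),
   (2,-1,-1,0,-1,-1,-1),
   (2,-1,0,-1,-1,-1,-1),
   (2,0,-1,-1,-1,-1,-1)]

set_option maxHeartbeats 2000000 in
lemma enum0 : ∀ a ∈ Finset.Icc (0:ℤ) 2, ∀ b1 ∈ Finset.Icc (-2:ℤ) 2, ∀ b2 ∈ Finset.Icc (-2:ℤ) 2,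
    ∀ b3 ∈ Finset.Icc (-2:ℤ) 2, ∀ b4 ∈ Finset.Icc (-2:ℤ) 2, ∀ b5 ∈ Finset.Icc (-2:ℤ) 2,
    a * a - (b1*b1 + b2*b2 + b3*b3 + b4*b4 + b5*b5
      + (1 - 3*a - b1 - b2 - b3 - b4 - b5) * (1 - 3*a - b1 - b2 - b3 - b4 - b5)) = -1 →
    (a, b1, b2, b3, b4, b5, 1 - 3*a - b1 - b2 - b3 - b4 - b5) ∈ L27 := by decide

set_option maxHeartbeats 1000000 in
lemma classify_s15 (a b1 b2 b3 b4 b5 b6 : ℤ)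
    (h1 : a * a - (b1*b1 + b2*b2 + b3*b3 + b4*b4 + b5*b5 + b6*b6) = -1)
    (h2 : -(3 * a) - (b1 + b2 + b3 + b4 + b5 + b6) = -1) :
    (a, b1, b2, b3, b4, b5, b6) ∈ L27 := by
  have hq : 3*a*a - 6*a - 5 ≤ 0 := by
    nlinarith [sq_nonneg (b1-b2), sq_nonneg (b1-b3), sq_nonneg (b1-b4), sq_nonneg (b1-b5),
      sq_nonneg (b1-b6), sq_nonneg (b2-b3), sq_nonneg (b2-b4), sq_nonneg (b2-b5),
      sq_nonneg (b2-b6), sq_nonneg (b3-b4), sq_nonneg (b3-b5), sq_nonneg (b3-b6),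
      sq_nonneg (b4-b5), sq_nonneg (b4-b6), sq_nonneg (b5-b6)]
  have ha0 : 0 ≤ a := by nlinarith [sq_nonneg (a+1)]
  have ha2 : a ≤ 2 := by nlinarith [sq_nonneg (a-3)]
  have ha4 : a * a ≤ 4 := by nlinarith
  have hb : b1*b1 + b2*b2 + b3*b3 + b4*b4 + b5*b5 + b6*b6 = a*a + 1 := by linarith
  have c1 : -2 ≤ b1 ∧ b1 ≤ 2 := by
    constructor <;> nlinarith [sq_nonneg (b1+3), sq_nonneg (b1-3), sq_nonneg b2, sq_nonneg b3,
      sq_nonneg b4, sq_nonneg b5, sq_nonneg b6]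
  have c2 : -2 ≤ b2 ∧ b2 ≤ 2 := by
    constructor <;> nlinarith [sq_nonneg (b2+3), sq_nonneg (b2-3), sq_nonneg b1, sq_nonneg b3,
      sq_nonneg b4, sq_nonneg b5, sq_nonneg b6]
  have c3 : -2 ≤ b3 ∧ b3 ≤ 2 := by
    constructor <;> nlinarith [sq_nonneg (b3+3), sq_nonneg (b3-3), sq_nonneg b1, sq_nonneg b2,
      sq_nonneg b4, sq_nonneg b5, sq_nonneg b6]
  have c4 : -2 ≤ b4 ∧ b4 ≤ 2 := by
    constructor <;> nlinarith [sq_nonneg (b4+3), sq_nonneg (b4-3), sq_nonneg b1, sq_nonneg b2,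
      sq_nonneg b3, sq_nonneg b5, sq_nonneg b6]
  have c5 : -2 ≤ b5 ∧ b5 ≤ 2 := by
    constructor <;> nlinarith [sq_nonneg (b5+3), sq_nonneg (b5-3), sq_nonneg b1, sq_nonneg b2,
      sq_nonneg b3, sq_nonneg b4, sq_nonneg b6]
  have e6 : 1 - 3*a - b1 - b2 - b3 - b4 - b5 = b6 := by omega
  have h := enum0 a (by simp [Finset.mem_Icc]; omega) b1 (by simp [Finset.mem_Icc]; omega)
    b2 (by simp [Finset.mem_Icc]; omega) b3 (by simp [Finset.mem_Icc]; omega)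
    b4 (by simp [Finset.mem_Icc]; omega) b5 (by simp [Finset.mem_Icc]; omega)
    (by rw [e6]; linarith)
  rwa [e6] at h

lemma form_self (v : Lam) : form v v =
    v 0 * v 0 - (v 1 * v 1 + v 2 * v 2 + v 3 * v 3 + v 4 * v 4 + v 5 * v 5 + v 6 * v 6) := by
  simp [form, Jmat, Matrix.mulVec, dotProduct, Fin.sum_univ_seven, Matrix.diagonal,
    show (![1,-1,-1,-1,-1,-1,-1] : Fin 7 → ℤ) 5 = -1 from rfl,
    show (![1,-1,-1,-1,-1,-1,-1] : Fin 7 → ℤ) 6 = -1 from rfl]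
  ring

lemma form_K (v : Lam) : form v Kv =
    -(3 * v 0) - (v 1 + v 2 + v 3 + v 4 + v 5 + v 6) := by
  simp [form, Jmat, Kv, Matrix.mulVec, dotProduct, Fin.sum_univ_seven, Matrix.diagonal,
    show (![1,-1,-1,-1,-1,-1,-1] : Fin 7 → ℤ) 5 = -1 from rfl,
    show (![1,-1,-1,-1,-1,-1,-1] : Fin 7 → ℤ) 6 = -1 from rfl,
    show (![(-3:ℤ),1,1,1,1,1,1]) 5 = 1 from rfl,
    show (![(-3:ℤ),1,1,1,1,1,1]) 6 = 1 from rfl]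
  ring

lemma eta7 (v : Lam) : v = ![v 0, v 1, v 2, v 3, v 4, v 5, v 6] := by
  funext i; fin_cases i <;> rfl


/-- **Lemma 4.13 (Galnonrat2).** Every set of `(-1)`-classes invariant under both `c` and `r`
whose elements are pairwise orthogonal has at most one element. -/
theorem c_r_invariant_orthogonal_sets_are_small
    (S : Set Lam) (hclass : ∀ v ∈ S, IsClass v)
    (hc : ∀ v ∈ S, (cU : Matrix (Fin 7) (Fin 7) ℤ) *ᵥ v ∈ S)
    (hr : ∀ v ∈ S, (rU : Matrix (Fin 7) (Fin 7) ℤ) *ᵥ v ∈ S)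
    (horth : ∀ v ∈ S, ∀ w ∈ S, v ≠ w → form v w = 0) :
    S.Subsingleton := by
  have key : ∀ v ∈ S, v = ![1,-1,0,0,-1,0,0] ∨ v = ![1,0,-1,0,0,-1,0] ∨ v = ![1,0,0,-1,0,0,-1] := by
    intro v hv
    obtain ⟨h1, h2⟩ := hclass v hv
    rw [form_self] at h1
    rw [form_K] at h2
    have h3 := classify_s15 (v 0) (v 1) (v 2) (v 3) (v 4) (v 5) (v 6) h1 h2
    simp only [L27, List.mem_cons, List.not_mem_nil, or_false, Prod.mk.injEq] at h3
    rcases h3 with ⟨e0,e1,e2,e3,e4,e5,e6⟩|⟨e0,e1,e2,e3,e4,e5,e6⟩|⟨e0,e1,e2,e3,e4,e5,e6⟩|⟨e0,e1,e2,e3,e4,e5,e6⟩|⟨e0,e1,e2,e3,e4,e5,e6⟩|⟨e0,e1,e2,e3,e4,e5,e6⟩|⟨e0,e1,e2,e3,e4,e5,e6⟩|⟨e0,e1,e2,e3,e4,e5,e6⟩|⟨e0,e1,e2,e3,e4,e5,e6⟩|⟨e0,e1,e2,e3,e4,e5,e6⟩|⟨e0,e1,e2,e3,e4,e5,e6⟩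|⟨e0,e1,e2,e3,e4,e5,e6⟩|⟨e0,e1,e2,e3,e4,e5,e6⟩|⟨e0,e1,e2,e3,e4,e5,e6⟩|⟨e0,e1,e2,e3,e4,e5,e6⟩|⟨e0,e1,e2,e3,e4,e5,e6⟩|⟨e0,e1,e2,e3,e4,e5,e6⟩|⟨e0,e1,e2,e3,e4,e5,e6⟩|⟨e0,e1,e2,e3,e4,e5,e6⟩|⟨e0,e1,e2,e3,e4,e5,e6⟩|⟨e0,e1,e2,e3,e4,e5,e6⟩|⟨e0,e1,e2,e3,e4,e5,e6⟩|⟨e0,e1,e2,e3,e4,e5,e6⟩|⟨e0,e1,e2,e3,e4,e5,e6⟩|⟨e0,e1,e2,e3,e4,e5,e6⟩|⟨e0,e1,e2,e3,e4,e5,e6⟩|⟨e0,e1,e2,e3,e4,e5,e6⟩ <;>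
      (have hv2 := eta7 v; rw [e0, e1, e2, e3, e4, e5, e6] at hv2; subst hv2)
    · exact absurd (horth _ hv _ (hr _ (hc _ hv)) (by decide)) (by decide)
    · exact absurd (horth _ hv _ (hr _ (hc _ hv)) (by decide)) (by decide)
    · exact absurd (horth _ hv _ (hr _ (hc _ hv)) (by decide)) (by decide)
    · exact absurd (horth _ hv _ (hc _ (hr _ hv)) (by decide)) (by decide)
    · exact absurd (horth _ hv _ (hc _ (hr _ hv)) (by decide)) (by decide)
    · exact absurd (horth _ hv _ (hc _ (hr _ hv)) (by decide)) (by decide)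
    · exact absurd (horth _ hv _ (hc _ hv) (by decide)) (by decide)
    · exact absurd (horth _ hv _ (hc _ hv) (by decide)) (by decide)
    · exact Or.inl rfl
    · exact absurd (horth _ hv _ (hc _ hv) (by decide)) (by decide)
    · exact absurd (horth _ hv _ (hc _ hv) (by decide)) (by decide)
    · exact absurd (horth _ hv _ (hc _ hv) (by decide)) (by decide)
    · exact absurd (horth _ hv _ (hc _ hv) (by decide)) (by decide)
    · exact Or.inr (Or.inl rfl)
    · exact absurd (horth _ hv _ (hc _ hv) (by decide)) (by decide)
    · exact absurd (horth _ hv _ (hc _ hv) (by decide)) (by decide)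
    · exact absurd (horth _ hv _ (hc _ hv) (by decide)) (by decide)
    · exact Or.inr (Or.inr rfl)
    · exact absurd (horth _ hv _ (hc _ hv) (by decide)) (by decide)
    · exact absurd (horth _ hv _ (hc _ hv) (by decide)) (by decide)
    · exact absurd (horth _ hv _ (hc _ hv) (by decide)) (by decide)
    · exact absurd (horth _ hv _ (hc _ (hr _ hv)) (by decide)) (by decide)
    · exact absurd (horth _ hv _ (hc _ (hr _ hv)) (by decide)) (by decide)
    · exact absurd (horth _ hv _ (hc _ (hr _ hv)) (by decide)) (by decide)
    · exact absurd (horth _ hv _ (hr _ (hc _ hv)) (by decide)) (by decide)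
    · exact absurd (horth _ hv _ (hr _ (hc _ hv)) (by decide)) (by decide)
    · exact absurd (horth _ hv _ (hr _ (hc _ hv)) (by decide)) (by decide)
  intro x hx y hy
  rcases key x hx with h1|h1|h1 <;> rcases key y hy with h2|h2|h2 <;> subst h1 <;> subst h2 <;>
    first
      | rfl
      | exact absurd (horth _ hx _ hy (by decide)) (by decide)
end
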